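/- arXiv:2310.16624 — 3 statements merged into one kernel-verified Lean document; each statement's English description precedes it below -/
import Mathlib

section
/- Let q and p be probability densities and suppose q(x) = Σᵢ αᵢ qᵢ(x) where the qᵢ are probability densities with pairwise disjoint supports Pᵢ and αᵢ = ∫_{Pᵢ} q. If p(x) = qᵢ(x) for all x ∈ Pᵢ, then the cross-entropy −∫ q log p equals h(q) − H(α), where h is differential entropy and H(α) = −Σᵢ αᵢ log αᵢ. -/
/-!
On `Pᵢ` we have `p = q / αᵢ`, so `q log q - q log p = q log αᵢ` there, while off `⋃ Pᵢ`
the integrand vanishes because `q` does. Splitting `∫ (q log q - q log p)` along the partition gives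
`∑ᵢ log αᵢ ∫_{Pᵢ} q = ∑ᵢ αᵢ log αᵢ`.
-/

open MeasureTheory

theorem MeasureTheory.integral_eq_sum_setIntegral_of_forall_notMem_iUnion
    {X E ι : Type*} [MeasurableSpace X] [NormedAddCommGroup E] [NormedSpace ℝ E] [Fintype ι]
    {μ : Measure X} {f : X → E} {s : ι → Set X}
    (hs : ∀ i, MeasurableSet (s i)) (h's : Pairwise (Function.onFun Disjoint s))
    (hf : Integrable f μ) (hf_zero : ∀ x, x ∉ ⋃ i, s i → f x = 0) :
    ∫ x, f x ∂μ = ∑ i, ∫ x in s i, f x ∂μ := by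
  rw [← setIntegral_eq_integral_of_forall_compl_eq_zero hf_zero,
    integral_iUnion_fintype hs h's fun _ => hf.integrableOn]

theorem Real.mul_log_sub_mul_log_div (x : ℝ) {a : ℝ} (ha : a ≠ 0) :
    x * Real.log x - x * Real.log (x / a) = x * Real.log a := by
  rcases eq_or_ne x 0 with rfl | hx
  · simp
  · rw [Real.log_div hx ha]
    ring

theorem cross_entropy_partition_general {D k : ℕ}
    (q p : (Fin D → ℝ) → ℝ)
    (P : Fin k → Set (Fin D → ℝ))
    (hPmeas : ∀ i, MeasurableSet (P i))
    (hPdisj : Pairwise (Function.onFun Disjoint P))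
    (hqsupp : ∀ x, x ∉ ⋃ i, P i → q x = 0)
    (α : Fin k → ℝ) (hα : ∀ i, α i = ∫ x in P i, q x)
    (hαpos : ∀ i, 0 < α i)
    (hp : ∀ i, ∀ x ∈ P i, p x = q x / α i)
    (hqlogq : Integrable (fun x => q x * Real.log (q x)))
    (hqlogp : Integrable (fun x => q x * Real.log (p x))) :
    (-∫ x, q x * Real.log (p x)) =
      (-∫ x, q x * Real.log (q x)) + ∑ i, α i * Real.log (α i) := by
  have h_piece (i : Fin k) :
      ∫ x in P i, (q x * Real.log (q x) - q x * Real.log (p x)) = α i * Real.log (α i) := by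
    rw [setIntegral_congr_fun (hPmeas i) fun x hx => by
        rw [hp i x hx, Real.mul_log_sub_mul_log_div _ (hαpos i).ne'],
      integral_mul_const, ← hα i]
  have h_split := integral_eq_sum_setIntegral_of_forall_notMem_iUnion
    (f := fun x => q x * Real.log (q x) - q x * Real.log (p x)) hPmeas hPdisj
    (hqlogq.sub hqlogp) fun x hx => by simp [hqsupp x hx]
  rw [integral_sub hqlogq hqlogp, Finset.sum_congr rfl fun i _ => h_piece i] at h_split
  linarith

/-- If `q` decomposes into components `qᵢ` with disjoint supports `Pᵢ` and weights
`αᵢ`, and `p = qᵢ` on `Pᵢ`, then the cross-entropy `−∫ q log p` equals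
`h(q) − H(α)` where `H(α) = −Σᵢ αᵢ log αᵢ`. -/
theorem cross_entropy_partition {D k : ℕ}
    (q p : (Fin D → ℝ) → ℝ)
    (P : Fin k → Set (Fin D → ℝ))
    (hPmeas : ∀ i, MeasurableSet (P i))
    (hPdisj : Pairwise (Function.onFun Disjoint P))
    (hq0 : ∀ x, 0 ≤ q x) (hqmeas : Measurable q)
    (hqsupp : ∀ x, x ∉ ⋃ i, P i → q x = 0)
    (α : Fin k → ℝ) (hα : ∀ i, α i = ∫ x in P i, q x)
    (hαpos : ∀ i, 0 < α i)
    (hp : ∀ i, ∀ x ∈ P i, p x = q x / α i)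
    (hqlogq : Integrable (fun x => q x * Real.log (q x)))
    (hqlogp : Integrable (fun x => q x * Real.log (p x))) :
    (-∫ x, q x * Real.log (p x)) =
      (-∫ x, q x * Real.log (q x)) + ∑ i, α i * Real.log (α i) :=
  cross_entropy_partition_general q p P hPmeas hPdisj hqsupp α hα hαpos hp hqlogq hqlogp
end

section
/- For the 1D linear model f(x) = a·x, g(z) = b·z with data q = N(0, s²) and latent N(0,1), the loss L(a,b) = s²a²/2 − log|a| + β s²(ab − 1)² has critical points exactly at (a, b) = (±1/s, ±s), and these are global minima. -/
/-- For the 1D linear model, the loss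
`L(a,b) = s²a²/2 − log|a| + β s²(ab − 1)²` has critical points (over `a ≠ 0`)
exactly at `(a,b) = (±1/s, ±s)`, and these are global minima. -/
theorem linear_model_critical_points (s β : ℝ) (hs : 0 < s) (hβ : 0 < β) :
    let L : ℝ → ℝ → ℝ := fun a b =>
      s ^ 2 * a ^ 2 / 2 - Real.log |a| + β * s ^ 2 * (a * b - 1) ^ 2
    (∀ a b : ℝ, a ≠ 0 →
      ((deriv (fun a' => L a' b) a = 0 ∧ deriv (fun b' => L a b') b = 0) ↔
        ((a = 1 / s ∧ b = s) ∨ (a = -(1 / s) ∧ b = -s)))) ∧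
    (∀ a b : ℝ, a ≠ 0 → L (1 / s) s ≤ L a b) ∧
    L (1 / s) s = L (-(1 / s)) (-s) := by
  intro L
  have hs0 : s ≠ 0 := ne_of_gt hs
  -- derivative in a
  have hda : ∀ (a b : ℝ), a ≠ 0 →
      deriv (fun a' => L a' b) a = s ^ 2 * a - 1 / a + β * s ^ 2 * (2 * (a * b - 1) * b) := by
    intro a b ha
    have h1 : HasDerivAt (fun a' : ℝ => s ^ 2 * a' ^ 2 / 2) (s ^ 2 * a) a := by
      have := ((hasDerivAt_pow 2 a).const_mul (s ^ 2)).div_const 2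
      exact this.congr_deriv (by ring)
    have h2 : HasDerivAt (fun a' : ℝ => Real.log |a'|) (1 / a) a := by
      have heq : (fun a' : ℝ => Real.log |a'|) = Real.log := funext fun x => Real.log_abs x
      rw [heq, one_div]
      exact Real.hasDerivAt_log ha
    have h3 : HasDerivAt (fun a' : ℝ => β * s ^ 2 * (a' * b - 1) ^ 2)
        (β * s ^ 2 * (2 * (a * b - 1) * b)) a := by
      have hb : HasDerivAt (fun a' : ℝ => a' * b - 1) b a := by
        simpa using ((hasDerivAt_id a).mul_const b).sub_const 1
      have := (hb.pow 2).const_mul (β * s ^ 2)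
      exact this.congr_deriv (by ring)
    exact ((h1.sub h2).add h3).deriv
  -- derivative in b
  have hdb : ∀ (a b : ℝ),
      deriv (fun b' => L a b') b = β * s ^ 2 * (2 * (a * b - 1) * a) := by
    intro a b
    have h3 : HasDerivAt (fun b' : ℝ => β * s ^ 2 * (a * b' - 1) ^ 2)
        (β * s ^ 2 * (2 * (a * b - 1) * a)) b := by
      have hb : HasDerivAt (fun b' : ℝ => a * b' - 1) a b := by
        simpa using ((hasDerivAt_id b).const_mul a).sub_const 1
      have := (hb.pow 2).const_mul (β * s ^ 2)
      exact this.congr_deriv (by ring)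
    have := ((hasDerivAt_const b (s ^ 2 * a ^ 2 / 2 - Real.log |a|)).add h3).deriv
    rw [zero_add] at this
    exact this
  have hβs : β * s ^ 2 > 0 := by positivity
  refine ⟨?_, ?_, ?_⟩
  · intro a b ha
    rw [hda a b ha, hdb a b]
    constructor
    · rintro ⟨hA, hB⟩
      have hab : a * b = 1 := by
        have h0 : 2 * (a * b - 1) * a = 0 := by
          rcases mul_eq_zero.mp hB with h | h
          · exact absurd h (ne_of_gt hβs)
          · exact h
        rcases mul_eq_zero.mp h0 with h | h
        · linarith [h]
        · exact absurd h ha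
      have ha2 : s ^ 2 * a ^ 2 = 1 := by
        rw [hab] at hA
        have : s ^ 2 * a - 1 / a = 0 := by linarith [hA]
        field_simp at this
        nlinarith [this]
      have : (a - 1 / s) * (a + 1 / s) = 0 := by
        field_simp
        nlinarith [ha2]
      rcases mul_eq_zero.mp this with h | h
      · left
        have hav : a = 1 / s := by linarith
        refine ⟨hav, ?_⟩
        rw [hav] at hab
        field_simp at hab
        linarith
      · right
        have hav : a = -(1 / s) := by linarith
        refine ⟨hav, ?_⟩
        rw [hav] at hab
        field_simp at hab
        linarith
    · rintro (⟨ha1, hb1⟩ | ⟨ha1, hb1⟩) <;> subst ha1 <;> subst hb1 <;>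
        constructor <;> field_simp <;> (try ring) <;> tauto
  · intro a b ha
    have habs : 0 < |a| := abs_pos.mpr ha
    have hlog : Real.log (s * |a|) ≤ s * |a| - 1 :=
      Real.log_le_sub_one_of_pos (by positivity)
    rw [Real.log_mul hs0 (ne_of_gt habs)] at hlog
    have key : Real.log s + Real.log |a| ≤ s ^ 2 * a ^ 2 / 2 - 1 / 2 := by
      have h1 : s * |a| - 1 ≤ (s ^ 2 * |a| ^ 2 - 1) / 2 := by nlinarith [sq_nonneg (s * |a| - 1)]
      have h2 : |a| ^ 2 = a ^ 2 := sq_abs a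
      nlinarith
    have hL1 : L (1 / s) s = 1 / 2 + Real.log s := by
      simp only [L]
      rw [abs_of_pos (by positivity : (0:ℝ) < 1 / s), Real.log_div one_ne_zero hs0,
        Real.log_one]
      field_simp
      ring
    rw [hL1]
    have hnn : 0 ≤ β * s ^ 2 * (a * b - 1) ^ 2 := by positivity
    simp only [L]
    linarith
  · simp only [L]
    rw [abs_neg]
    ring_nf
end

section
/- If the latent density p on ℝ^{N×n} is invariant under a group G acting linearly with |det Q| = 1 for all Q ∈ G, and the C¹ diffeomorphism g : ℝ^{N×n} → ℝ^{N×n} is equivariant (g(Qz) = Q g(z)), then the pushforward density p_g(x) = p(g⁻¹(x))|det Dg⁻¹(x)| is invariant: p_g(Qx) = p_g(x) for all Q ∈ G. -/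
open Matrix

/-- The Jacobian matrix of `f` at `x`, given by the Fréchet derivative. -/
noncomputable def jacobianMatrix {m : ℕ} (f : (Fin m → ℝ) → (Fin m → ℝ)) (x : Fin m → ℝ) :
    Matrix (Fin m) (Fin m) ℝ :=
  Matrix.of fun i j => fderiv ℝ f x (Pi.single j 1) i

lemma jacobianMatrix_eq_toMatrix' {m : ℕ} (f : (Fin m → ℝ) → (Fin m → ℝ)) (x : Fin m → ℝ) :
    jacobianMatrix f x = LinearMap.toMatrix' (fderiv ℝ f x : (Fin m → ℝ) →ₗ[ℝ] (Fin m → ℝ)) := by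
  ext i j
  rw [LinearMap.toMatrix'_apply]
  simp only [jacobianMatrix, Matrix.of_apply, ContinuousLinearMap.coe_coe]

lemma jacobianMatrix_det {m : ℕ} (f : (Fin m → ℝ) → (Fin m → ℝ)) (x : Fin m → ℝ) :
    (jacobianMatrix f x).det
      = LinearMap.det (fderiv ℝ f x : (Fin m → ℝ) →ₗ[ℝ] (Fin m → ℝ)) := by
  rw [jacobianMatrix_eq_toMatrix', LinearMap.det_toMatrix']

/-- If the latent density `p` is invariant under a set of volume-preserving linear
maps `Q` and the diffeomorphism `g` is equivariant, then the pushforward density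
`p_g(x) = p(g⁻¹ x) |det Dg⁻¹(x)|` is invariant. -/
theorem pushforward_density_invariant {m : ℕ}
    (S : Set (Matrix (Fin m) (Fin m) ℝ))
    (hSdet : ∀ Q ∈ S, |Q.det| = 1)
    (p : (Fin m → ℝ) → ℝ)
    (hpinv : ∀ Q ∈ S, ∀ z, p (Q *ᵥ z) = p z)
    (g ginv : (Fin m → ℝ) → (Fin m → ℝ))
    (hg : ContDiff ℝ 1 g) (hginv : ContDiff ℝ 1 ginv)
    (hgl : Function.LeftInverse ginv g) (hgr : Function.RightInverse ginv g)
    (hequiv : ∀ Q ∈ S, ∀ z, g (Q *ᵥ z) = Q *ᵥ g z) :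
    ∀ Q ∈ S, ∀ x,
      p (ginv (Q *ᵥ x)) * |(jacobianMatrix ginv (Q *ᵥ x)).det| =
        p (ginv x) * |(jacobianMatrix ginv x).det| := by
  intro Q hQ x
  have hd : Differentiable ℝ ginv := hginv.differentiable one_ne_zero
  -- equivariance of ginv
  have hcomm : ∀ z, ginv (Q *ᵥ z) = Q *ᵥ ginv z := by
    intro z
    have := hequiv Q hQ (ginv z)
    rw [hgr z] at this
    rw [← this, hgl]
  -- linear map for Q
  set L : (Fin m → ℝ) →L[ℝ] (Fin m → ℝ) :=
    LinearMap.toContinuousLinearMap (Matrix.toLin' Q) with hL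
  have hLapp : ∀ z, L z = Q *ᵥ z := fun z => rfl
  have hfun : ginv ∘ L = L ∘ ginv := by
    funext z; simp [hLapp, hcomm z, Function.comp]
  have h1 : fderiv ℝ (ginv ∘ L) x = (fderiv ℝ ginv (L x)).comp L := by
    rw [fderiv_comp x (hd _) L.differentiableAt, L.fderiv]
  have h2 : fderiv ℝ (L ∘ ginv) x = L.comp (fderiv ℝ ginv x) := by
    rw [fderiv_comp x L.differentiableAt (hd x), L.fderiv]
  have h3 : (fderiv ℝ ginv (L x)).comp L = L.comp (fderiv ℝ ginv x) := by
    rw [← h1, ← h2, hfun]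
  -- determinants
  have hdet : LinearMap.det ((fderiv ℝ ginv (Q *ᵥ x) : (Fin m → ℝ) →ₗ[ℝ] _))
      = LinearMap.det ((fderiv ℝ ginv x : (Fin m → ℝ) →ₗ[ℝ] _)) := by
    have hdetL : LinearMap.det (L : (Fin m → ℝ) →ₗ[ℝ] _) = Q.det := by
      simp [hL, LinearMap.coe_toContinuousLinearMap, LinearMap.det_toLin']
    have hQne : Q.det ≠ 0 := by
      intro h
      have := hSdet Q hQ
      rw [h] at this; simp at this
    have h4 := congrArg (fun (T : (Fin m → ℝ) →L[ℝ] (Fin m → ℝ)) =>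
      LinearMap.det (T : (Fin m → ℝ) →ₗ[ℝ] (Fin m → ℝ))) h3
    simp only [ContinuousLinearMap.toLinearMap_comp, LinearMap.det_comp, hdetL] at h4
    have hLx : L x = Q *ᵥ x := rfl
    rw [hLx] at h4
    exact mul_right_cancel₀ hQne (by rw [h4, mul_comm])
  rw [hcomm x, hpinv Q hQ, jacobianMatrix_det, jacobianMatrix_det, hdet]
end
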